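/- arXiv:math/0209219 — 2 statements merged into one kernel-verified Lean document; each statement's English description precedes it below -/
import Mathlib

section
/- Let H be a connected topological group and G a topological group containing a central closed subgroup isomorphic to the circle group S¹ such that G/S¹ ≅ H. If for every x, y in G the commutator map descends to a continuous bilinear pairing H × H → S¹, then this pairing is trivial; in particular, if H is a connected compact abelian group, every such central extension G of H by S¹ is abelian. -/
open scoped commutatorElement

/-! For each `y`, `x ↦ β x y` is a character of the compact group `H`. A character with values in
the open right half-plane is trivial, so by compactness of `H` the set of `y` whose character is
trivial is open. It is also closed and contains `1`, hence is all of the connected space `H`; then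
every commutator `ι (β _ _)` equals `1`. -/

lemma isOpen_setOf_forall_mem_of_compactSpace {X Y : Type*} [TopologicalSpace X]
    [TopologicalSpace Y] [CompactSpace X] {U : Set (X × Y)} (hU : IsOpen U) :
    IsOpen {y | ∀ x, (x, y) ∈ U} := by
  rw [← isClosed_compl_iff]
  convert isClosedMap_snd_of_compactSpace _ hU.isClosed_compl using 1
  ext y
  simp

namespace Circle

lemma re_sq (z : Circle) : ((z ^ 2 : Circle) : ℂ).re = 2 * (z : ℂ).re ^ 2 - 1 := by
  have h := normSq_coe z
  rw [Complex.normSq_apply] at h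
  rw [coe_pow, sq, Complex.mul_re]
  linear_combination -h

lemma re_le_one (z : Circle) : (z : ℂ).re ≤ 1 :=
  (Complex.re_le_norm _).trans_eq (norm_coe z)

lemma eq_one_of_re_eq_one {z : Circle} (h : (z : ℂ).re = 1) : z = 1 := by
  have him : (z : ℂ).im = 0 := by
    have := normSq_coe z
    rw [Complex.normSq_apply, h] at this
    nlinarith
  exact ext (Complex.ext h him)

/-- Squaring doubles the distance `1 - re z` as long as the real part stays positive. -/
lemma eq_one_of_forall_re_pow_pos (z : Circle) (h : ∀ n : ℕ, 0 < ((z ^ n : Circle) : ℂ).re) :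
    z = 1 := by
  have hdouble : ∀ k : ℕ, 2 ^ k * (1 - (z : ℂ).re) ≤ 1 - ((z ^ 2 ^ k : Circle) : ℂ).re := by
    intro k
    induction k with
    | zero => simp
    | succ k ih =>
      have hpos := h (2 ^ k)
      have hle := re_le_one (z ^ 2 ^ k)
      rw [show z ^ 2 ^ (k + 1) = (z ^ 2 ^ k) ^ 2 by rw [pow_succ, pow_mul], re_sq, pow_succ]
      nlinarith [mul_nonneg hpos.le (sub_nonneg.2 hle)]
  have hsmall : 1 - (z : ℂ).re ≤ 0 := by
    by_contra! hε
    obtain ⟨k, hk⟩ := pow_unbounded_of_one_lt (1 / (1 - (z : ℂ).re)) one_lt_two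
    rw [div_lt_iff₀ hε] at hk
    linarith [hdouble k, h (2 ^ k)]
  exact eq_one_of_re_eq_one (le_antisymm (re_le_one z) (by linarith))

end Circle

namespace MonoidHom

lemma eq_one_of_forall_re_pos {M : Type*} [Monoid M] (χ : M →* Circle)
    (h : ∀ x, 0 < (χ x : ℂ).re) : χ = 1 :=
  ext fun x => Circle.eq_one_of_forall_re_pow_pos (χ x) fun n => map_pow χ x n ▸ h (x ^ n)

/-- The characters of a compact monoid form a discrete space. -/
lemma eq_one_of_continuous_family {X Y : Type*} [Monoid X] [TopologicalSpace X] [CompactSpace X]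
    [TopologicalSpace Y] [PreconnectedSpace Y] (χ : Y → X →* Circle)
    (hχ : Continuous fun p : X × Y => χ p.2 p.1) {y₀ : Y} (h₀ : χ y₀ = 1) (y : Y) :
    χ y = 1 := by
  set K : Set Y := {y | χ y = 1}
  have hK : K = {y | ∀ x, (x, y) ∈ {p : X × Y | 0 < (χ p.2 p.1 : ℂ).re}} := by
    ext y
    refine ⟨fun hy x => ?_, eq_one_of_forall_re_pos (χ y)⟩
    simp [show χ y = 1 from hy]
  have hKopen : IsOpen K := hK ▸ isOpen_setOf_forall_mem_of_compactSpace
    (isOpen_lt continuous_const (Complex.continuous_re.comp (continuous_subtype_val.comp hχ)))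
  have hKclosed : IsClosed K := by
    have : K = ⋂ x : X, {y | χ y x = 1} := by
      ext y
      simp [K, MonoidHom.ext_iff]
    rw [this]
    exact isClosed_iInter fun x => isClosed_eq (hχ.comp (Continuous.prodMk_right x)) continuous_const
  exact Set.eq_univ_iff_forall.mp (IsClopen.eq_univ ⟨hKclosed, hKopen⟩ ⟨y₀, h₀⟩) y

end MonoidHom

theorem stmt0_general {G H : Type*} [Group G]
    [CommGroup H] [TopologicalSpace H] [CompactSpace H]
    [ConnectedSpace H]
    (π : G →* H) (ι : Circle →* G)
    (β : H → H → Circle)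
    (hβc : Continuous fun p : H × H => β p.1 p.2)
    (hβl : ∀ x y z : H, β (x * y) z = β x z * β y z)
    (hβr : ∀ x y z : H, β x (y * z) = β x y * β x z)
    (hcomm : ∀ g h : G, ⁅g, h⁆ = ι (β (π g) (π h))) :
    (∀ x y : H, β x y = 1) ∧ ∀ g h : G, g * h = h * g := by
  let χ : H → H →* Circle := fun y =>
    { toFun := fun x => β x y
      map_one' := by
        have := hβl 1 1 y
        rwa [mul_one, left_eq_mul] at this
      map_mul' := fun x x' => hβl x x' y }
  have hχ₁ : χ 1 = 1 := MonoidHom.ext fun x => by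
    have := hβr x 1 1
    rwa [mul_one, left_eq_mul] at this
  have hβ : ∀ x y : H, β x y = 1 := fun x y =>
    DFunLike.congr_fun (MonoidHom.eq_one_of_continuous_family χ hβc hχ₁ y) x
  refine ⟨hβ, fun g h => commutatorElement_eq_one_iff_mul_comm.mp ?_⟩
  rw [hcomm, hβ, map_one]

/-- Let `H` be a connected compact abelian topological group and `G` a topological
group which is a central extension of `H` by the circle group `S¹` (given by a
continuous injection `ι : Circle →* G` with central image, equal to the kernel of a
continuous surjection `π : G →* H`).  If the commutator map of `G` descends to a
continuous bilinear pairing `β : H × H → S¹`, then `β` is trivial; in particular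
`G` is abelian. -/
theorem stmt0 {G H : Type*} [Group G] [TopologicalSpace G] [IsTopologicalGroup G]
    [CommGroup H] [TopologicalSpace H] [IsTopologicalGroup H] [CompactSpace H]
    [ConnectedSpace H]
    (π : G →* H) (hπc : Continuous π) (hπs : Function.Surjective π)
    (ι : Circle →* G) (hιc : Continuous ι) (hιi : Function.Injective ι)
    (hker : ι.range = π.ker)
    (hcent : ∀ (z : Circle) (g : G), ι z * g = g * ι z)
    (β : H → H → Circle)
    (hβc : Continuous fun p : H × H => β p.1 p.2)
    (hβl : ∀ x y z : H, β (x * y) z = β x z * β y z)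
    (hβr : ∀ x y z : H, β x (y * z) = β x y * β x z)
    (hcomm : ∀ g h : G, ⁅g, h⁆ = ι (β (π g) (π h))) :
    (∀ x y : H, β x y = 1) ∧ ∀ g h : G, g * h = h * g :=
  stmt0_general π ι β hβc hβl hβr hcomm
end

section
/- Every central extension of a real topological vector space (or more specifically of ℝ) by ℝ given by a continuous symmetric 2-cocycle splits; equivalently, every continuous symmetric 2-cocycle c : ℝ × ℝ → ℝ is a coboundary: there exists a continuous function b : ℝ → ℝ with c(x,y) = b(x+y) − b(x) − b(y). -/
/-!
Averaging the cocycle identity `c x y + c (x + y) s = c y s + c x (y + s)` over `s ∈ [0, 1]`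
shows that `c` plus the coboundary of `h x = ∫₀¹ c x s` is
`∫_y^{y+1} c x - ∫_0^1 c x = ∫_0^y (c x (u + 1) - c x u) du`.
By the cocycle identity again the integrand is `k (x + u) - k u` with `k t = c t 1 - c t 0`,
so this is the coboundary of a primitive `K` of `k`, and `c` is the coboundary of `K - h`.
-/

open intervalIntegral

section Cocycle

variable {G M : Type*} [AddMonoid G] [AddCommGroup M] {c : G → G → M}

theorem cocycle_apply_zero_right
    (hcocycle : ∀ x y z, c x y + c (x + y) z = c y z + c x (y + z)) (x : G) :
    c x 0 = c 0 0 := by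
  simpa using hcocycle x 0 0

theorem cocycle_apply_add_sub
    (hcocycle : ∀ x y z, c x y + c (x + y) z = c y z + c x (y + z)) (x u a : G) :
    c x (u + a) - c x u = (c (x + u) a - c (x + u) 0) - (c u a - c u 0) := by
  rw [cocycle_apply_zero_right hcocycle (x + u), cocycle_apply_zero_right hcocycle u,
    sub_sub_sub_cancel_right, sub_eq_sub_iff_add_eq_add, add_comm (c (x + u) a),
    hcocycle x u a, add_comm]

end Cocycle

section Integral

variable {f : ℝ → ℝ}

theorem integral_window_sub_integral_window (hf : Continuous f) (y a : ℝ) :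
    (∫ u in y..y + a, f u) - (∫ u in 0..a, f u) = ∫ u in 0..y, (f (u + a) - f u) := by
  rw [integral_interval_sub_interval_comm' (hf.intervalIntegrable _ _)
      (hf.intervalIntegrable _ _) (hf.intervalIntegrable _ _),
    integral_sub (f := fun u => f (u + a))
      ((hf.comp (continuous_add_const a)).intervalIntegrable _ _) (hf.intervalIntegrable _ _),
    integral_comp_add_right f a, zero_add]

theorem integral_comp_add_sub_eq_primitive_coboundary (hf : Continuous f) (x y : ℝ) :
    ∫ u in 0..y, (f (x + u) - f u) =
      (∫ t in 0..x + y, f t) - (∫ t in 0..x, f t) - ∫ t in 0..y, f t := by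
  rw [integral_sub (f := fun u => f (x + u))
      ((hf.comp (continuous_const_add x)).intervalIntegrable _ _) (hf.intervalIntegrable _ _),
    integral_comp_add_left f x, add_zero,
    integral_interval_sub_left (hf.intervalIntegrable _ _) (hf.intervalIntegrable _ _)]

end Integral

section ContinuousCocycle

variable {c : ℝ → ℝ → ℝ} (hc : Continuous fun p : ℝ × ℝ => c p.1 p.2)
include hc

theorem cocycle_add_integral_eq
    (hcocycle : ∀ x y z : ℝ, c x y + c (x + y) z = c y z + c x (y + z)) (x y : ℝ) :
    c x y + ∫ s in 0..1, c (x + y) s = (∫ s in 0..1, c y s) + ∫ u in y..y + 1, c x u := by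
  have hc₁ (a : ℝ) : Continuous (c a) := hc.comp (continuous_const.prodMk continuous_id)
  have hcx : Continuous fun s => c x (y + s) := (hc₁ x).comp (continuous_const_add y)
  calc c x y + ∫ s in 0..1, c (x + y) s
      = ∫ s in 0..1, (c x y + c (x + y) s) := by
        rw [integral_add intervalIntegrable_const ((hc₁ _).intervalIntegrable _ _),
          integral_const, sub_zero, one_smul]
    _ = ∫ s in 0..1, (c y s + c x (y + s)) := integral_congr fun s _ => hcocycle x y s
    _ = (∫ s in 0..1, c y s) + ∫ u in y..y + 1, c x u := by
        rw [integral_add ((hc₁ y).intervalIntegrable _ _) (hcx.intervalIntegrable _ _),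
          integral_comp_add_left (c x) y, add_zero]

end ContinuousCocycle

theorem stmt3_general (c : ℝ → ℝ → ℝ) (hc : Continuous fun p : ℝ × ℝ => c p.1 p.2)
    (hcocycle : ∀ x y z : ℝ, c x y + c (x + y) z = c y z + c x (y + z)) :
    ∃ b : ℝ → ℝ, Continuous b ∧ ∀ x y : ℝ, c x y = b (x + y) - b x - b y := by
  set k : ℝ → ℝ := fun t => c t 1 - c t 0
  have hk : Continuous k :=
    (hc.comp (continuous_id.prodMk continuous_const)).sub
      (hc.comp (continuous_id.prodMk continuous_const))
  refine ⟨fun x => (∫ t in 0..x, k t) - ∫ s in 0..1, c x s, ?_, fun x y => ?_⟩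
  · exact (continuous_primitive (fun _ _ => hk.intervalIntegrable _ _) 0).sub
      (continuous_parametric_intervalIntegral_of_continuous' hc 0 1)
  have hcx : Continuous (c x) := hc.comp (continuous_const.prodMk continuous_id)
  have hwindow := integral_window_sub_integral_window hcx y 1
  have hshift : ∫ u in 0..y, (c x (u + 1) - c x u) = ∫ u in 0..y, (k (x + u) - k u) :=
    integral_congr fun u _ => cocycle_apply_add_sub hcocycle x u 1
  beta_reduce
  linarith [cocycle_add_integral_eq hc hcocycle x y,
    integral_comp_add_sub_eq_primitive_coboundary hk x y]

/-- Every continuous symmetric 2-cocycle `c : ℝ × ℝ → ℝ` (trivial action on the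
coefficients `ℝ`) is the coboundary of a continuous function: `H²_sym(ℝ, ℝ) = 0`. -/
theorem stmt3 (c : ℝ → ℝ → ℝ) (hc : Continuous fun p : ℝ × ℝ => c p.1 p.2)
    (hcocycle : ∀ x y z : ℝ, c x y + c (x + y) z = c y z + c x (y + z))
    (hsym : ∀ x y : ℝ, c x y = c y x) :
    ∃ b : ℝ → ℝ, Continuous b ∧ ∀ x y : ℝ, c x y = b (x + y) - b x - b y :=
  stmt3_general c hc hcocycle
end
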